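/- Existence of uniform representatives in special classes: Let G be a connected weighted graph (possibly with loops) of genus g such that every vertex v with ω(v) = 0 satisfies m(v,v) ≥ 1 (i.e., is adjacent to a loop). Let d be a divisor on G such that both d and k_G − d are linearly equivalent to effective divisors. Then d is linearly equivalent to a uniform divisor, i.e., to a divisor d' satisfying 0 ≤ d'(v) ≤ 2ω(v) − 2 + val(v) for every vertex v. -/

import Mathlib

open Finset

section Preliminaries

variable {V : Type} [Fintype V] [DecidableEq V]

/-- The degree of a divisor on a graph with vertex set `V`. -/
def degDiv (d : V → ℤ) : ℤ := ∑ v, d v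

/-- A divisor is effective if it is nonnegative at every vertex. -/
def Effective (d : V → ℤ) : Prop := ∀ v, 0 ≤ d v

/-- The principal divisor `t_Z` associated to a subset `Z` of vertices, for the
graph with edge multiplicity function `m`. -/
def tZ (m : V → V → ℕ) (Z : Finset V) : V → ℤ := fun v =>
  if v ∈ Z then -(∑ u ∈ Zᶜ, (m v u : ℤ)) else ∑ u ∈ Z, (m v u : ℤ)

/-- Two divisors are linearly equivalent if their difference lies in the subgroup
generated by the divisors `t_Z`. -/
def LinEquiv (m : V → V → ℕ) (d d' : V → ℤ) : Prop :=
  d - d' ∈ AddSubgroup.closure (Set.range (tZ m))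

/-- The simple graph associated to an edge multiplicity function `m`
(an edge between distinct `u`, `v` whenever `m u v > 0`; loops are discarded). -/
def assocGraph (m : V → V → ℕ) : SimpleGraph V where
  Adj u v := u ≠ v ∧ (0 < m u v ∨ 0 < m v u)
  symm := ⟨fun _ _ h => ⟨h.1.symm, h.2.symm⟩⟩
  loopless := ⟨fun _ h => h.1 rfl⟩

end Preliminaries

section Weighted

variable {V : Type} [Fintype V] [DecidableEq V]

/-- The valence of a vertex of a weighted graph with loops:
`val(v) = ∑_{u ≠ v} m v u + 2 * m v v`. -/
def valence (m : V → V → ℕ) (v : V) : ℤ := (∑ u, (m v u : ℤ)) + m v v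

/-- The genus of a weighted graph with loops:
`g = |E| - |V| + 1 + ∑_v ω v` where `|E| = ∑_v m v v + (1/2) ∑_{u ≠ v} m u v`. -/
def genusW (m : V → V → ℕ) (ω : V → ℕ) : ℤ :=
  ((∑ u, ∑ v, (m u v : ℤ)) + ∑ v, (m v v : ℤ)) / 2 - Fintype.card V + 1
    + ∑ v, (ω v : ℤ)

/-- The canonical divisor of a weighted graph with loops:
`k_G(v) = 2 ω(v) - 2 + val(v)`. -/
def canonicalW (m : V → V → ℕ) (ω : V → ℕ) : V → ℤ :=
  fun v => 2 * (ω v : ℤ) - 2 + valence m v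

end Weighted


/-!
Write `d ~ f` and `k_G - d ~ f'` with `f, f'` effective. Every `t_Z` is the Laplacian of the
indicator of `Z`, so `f + f' + Δφ = k_G` for some potential `φ`. Let `B` be the top level set of
`φ`. At `v ∈ B` the loop condition gives `a v + b v ≥ deg_B(v) + 2 deg_{Bᶜ}(v)` for the current
pair `(a, b)` (initially `(f, f')`), and a maximum weighted cut `B = S ∪ (B \ S)` splits the
firing of `B` into a firing of `S`, absorbed by `a`, and of `B \ S`, absorbed by `b`, both
staying effective. This lowers the maximum of `φ` by one, so eventually `φ` is constant,
`Δφ = 0` and `0 ≤ a ≤ k_G`.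
-/

namespace LinEquiv

variable {V : Type} [Fintype V] [DecidableEq V] {m : V → V → ℕ}

theorem refl (d : V → ℤ) : LinEquiv m d d := by
  simp [LinEquiv, zero_mem]

theorem trans {d e f : V → ℤ} (hde : LinEquiv m d e) (hef : LinEquiv m e f) :
    LinEquiv m d f := by
  simpa [LinEquiv] using add_mem hde hef

theorem add_tZ (d : V → ℤ) (Z : Finset V) : LinEquiv m d (d + tZ m Z) := by
  simpa [LinEquiv] using
    neg_mem (AddSubgroup.subset_closure (k := Set.range (tZ m)) (Set.mem_range_self Z))

end LinEquiv

section Laplacian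

variable {V : Type} [Fintype V]

def laplacian (m : V → V → ℕ) : (V → ℤ) →+ (V → ℤ) :=
  AddMonoidHom.mk' (fun φ v => ∑ u, (m v u : ℤ) * (φ u - φ v)) fun φ ψ => by
    ext v
    simp only [Pi.add_apply, ← sum_add_distrib]
    exact sum_congr rfl fun u _ => by ring

theorem laplacian_apply (m : V → V → ℕ) (φ : V → ℤ) (v : V) :
    laplacian m φ v = ∑ u, (m v u : ℤ) * (φ u - φ v) := rfl

variable [DecidableEq V]

theorem laplacian_indicator (m : V → V → ℕ) (Z : Finset V) :
    laplacian m ((Z : Set V).indicator 1) = tZ m Z := by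
  ext v
  rw [laplacian_apply, ← sum_add_sum_compl Z, tZ]
  have hZc : ∀ u ∈ Zᶜ, (Z : Set V).indicator (1 : V → ℤ) u = 0 := fun u hu =>
    Set.indicator_of_notMem (by simpa using hu) _
  by_cases hv : v ∈ Z
  · simp +contextual [hv, hZc, ← sum_neg_distrib]
  · simp +contextual [hv, hZc]

theorem closure_range_tZ_le_range_laplacian (m : V → V → ℕ) :
    AddSubgroup.closure (Set.range (tZ m)) ≤ (laplacian m).range :=
  AddSubgroup.closure_le _ |>.mpr <| by
    rintro _ ⟨Z, rfl⟩
    exact ⟨_, laplacian_indicator m Z⟩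

theorem tZ_eq_add_tZ_sdiff (m : V → V → ℕ) {S B : Finset V} (hSB : S ⊆ B) :
    tZ m B = tZ m S + tZ m (B \ S) := by
  rw [← laplacian_indicator, ← laplacian_indicator, ← laplacian_indicator, ← map_add]
  congr 1
  ext v
  by_cases hvS : v ∈ S
  · simp [hvS, hSB hvS]
  · by_cases hvB : v ∈ B <;> simp [hvS, hvB]

theorem laplacian_apply_le_neg_sum_compl (m : V → V → ℕ) {φ : V → ℤ} {B : Finset V} {v : V}
    (hB : ∀ u ∈ B, φ u = φ v) (hBc : ∀ u ∉ B, φ u < φ v) :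
    laplacian m φ v ≤ -∑ u ∈ Bᶜ, (m v u : ℤ) := by
  rw [laplacian_apply, ← sum_add_sum_compl B, ← sum_neg_distrib,
    sum_eq_zero fun u hu => by rw [hB u hu, sub_self, mul_zero], zero_add]
  refine sum_le_sum fun u hu => ?_
  have := hBc u (mem_compl.mp hu)
  nlinarith [(m v u).cast_nonneg (α := ℤ)]

end Laplacian

section Splitting

variable {V : Type}

theorem effective_add_tZ [Fintype V] [DecidableEq V] (m : V → V → ℕ) {a : V → ℤ}
    {S : Finset V} (ha : Effective a) (hS : ∀ v ∈ S, ∑ u ∈ Sᶜ, (m v u : ℤ) ≤ a v) :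
    Effective (a + tZ m S) := by
  intro v
  by_cases hv : v ∈ S
  · simpa [tZ, hv] using hS v hv
  · simpa [tZ, hv] using add_nonneg (ha v) (sum_nonneg fun u _ => (m v u).cast_nonneg)

def cutValue (m : V → V → ℕ) (a b : V → ℤ) (S T : Finset V) : ℤ :=
  ∑ v ∈ S, a v + ∑ v ∈ T, b v - ∑ x ∈ S, ∑ y ∈ T, (m x y : ℤ)

theorem cutValue_swap (m : V → V → ℕ) (hsymm : ∀ u v, m u v = m v u) (a b : V → ℤ)
    (S T : Finset V) : cutValue m a b S T = cutValue m b a T S := by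
  rw [cutValue, cutValue, sum_comm]
  simp only [hsymm]
  ring

theorem cutValue_insert_left_sub_insert_right [DecidableEq V] (m : V → V → ℕ) (a b : V → ℤ)
    {S T : Finset V} {v : V} (hvS : v ∉ S) (hvT : v ∉ T) :
    cutValue m a b (insert v S) T - cutValue m a b S (insert v T)
      = a v - b v - ∑ y ∈ T, (m v y : ℤ) + ∑ x ∈ S, (m x v : ℤ) := by
  simp only [cutValue, sum_insert hvS, sum_insert hvT, sum_add_distrib]
  ring

theorem sum_compl_le_of_isMaxOn_cutValue [Fintype V] [DecidableEq V] (m : V → V → ℕ)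
    (hsymm : ∀ u v, m u v = m v u)
    {a b : V → ℤ} {B S : Finset V}
    (hB : ∀ v ∈ B, ∑ u ∈ B.erase v, (m v u : ℤ) + 2 * ∑ u ∈ Bᶜ, (m v u : ℤ) ≤ a v + b v)
    (hSB : S ⊆ B) (hmax : ∀ S' ⊆ B, cutValue m a b S' (B \ S') ≤ cutValue m a b S (B \ S))
    {v : V} (hv : v ∈ S) : ∑ u ∈ Sᶜ, (m v u : ℤ) ≤ a v := by
  have hmove : 0 ≤ cutValue m a b (insert v (S.erase v)) (B \ S)
      - cutValue m a b (S.erase v) (insert v (B \ S)) := by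
    rw [insert_erase hv, ← sdiff_erase (hSB hv), sub_nonneg]
    exact hmax _ ((erase_subset v S).trans hSB)
  rw [cutValue_insert_left_sub_insert_right m a b (notMem_erase v S)
    (fun h => (mem_sdiff.mp h).2 hv)] at hmove
  have hBv := hB v (hSB hv)
  have hBerase : ∑ u ∈ B.erase v, (m v u : ℤ)
      = ∑ u ∈ S.erase v, (m v u : ℤ) + ∑ u ∈ B \ S, (m v u : ℤ) := by
    rw [sum_erase_eq_sub (hSB hv), sum_erase_eq_sub hv, ← sum_sdiff hSB]
    ring
  have hScompl : ∑ u ∈ Sᶜ, (m v u : ℤ) = ∑ u ∈ B \ S, (m v u : ℤ) + ∑ u ∈ Bᶜ, (m v u : ℤ) := by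
    rw [← sum_sdiff (compl_subset_compl.mpr hSB), compl_sdiff_compl]
  simp only [hsymm _ v] at hmove
  linarith

theorem exists_subset_effective_add_tZ [Fintype V] [DecidableEq V] (m : V → V → ℕ)
    (hsymm : ∀ u v, m u v = m v u)
    {a b : V → ℤ} (ha : Effective a) (hb : Effective b) {B : Finset V}
    (hB : ∀ v ∈ B, ∑ u ∈ B.erase v, (m v u : ℤ) + 2 * ∑ u ∈ Bᶜ, (m v u : ℤ) ≤ a v + b v) :
    ∃ S ⊆ B, Effective (a + tZ m S) ∧ Effective (b + tZ m (B \ S)) := by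
  obtain ⟨S, hSB, hmax⟩ := B.powerset.exists_max_image
    (fun S => cutValue m a b S (B \ S)) ⟨∅, empty_mem_powerset B⟩
  rw [mem_powerset] at hSB
  replace hmax : ∀ S' ⊆ B, cutValue m a b S' (B \ S') ≤ cutValue m a b S (B \ S) :=
    fun S' hS' => hmax S' (mem_powerset.mpr hS')
  refine ⟨S, hSB, effective_add_tZ m ha fun v hv => ?_, effective_add_tZ m hb fun v hv => ?_⟩
  · exact sum_compl_le_of_isMaxOn_cutValue m hsymm hB hSB hmax hv
  · have hBS : ∀ v ∈ B, ∑ u ∈ B.erase v, (m v u : ℤ) + 2 * ∑ u ∈ Bᶜ, (m v u : ℤ) ≤ b v + a v :=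
      fun v hv => (hB v hv).trans_eq (add_comm _ _)
    refine sum_compl_le_of_isMaxOn_cutValue m hsymm hBS sdiff_subset (fun S' hS' => ?_) hv
    calc cutValue m b a S' (B \ S')
        = cutValue m a b (B \ S') (B \ (B \ S')) := by
          rw [cutValue_swap m hsymm, Finset.sdiff_sdiff_eq_self hS']
      _ ≤ cutValue m a b S (B \ S) := hmax _ sdiff_subset
      _ = cutValue m b a (B \ S) (B \ (B \ S)) := by
          rw [Finset.sdiff_sdiff_eq_self hSB, cutValue_swap m hsymm]

end Splitting

section Uniform

variable {V : Type} [Fintype V] [DecidableEq V]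

theorem sum_erase_le_canonicalW (ω : V → ℕ) (m : V → V → ℕ)
    (hloops : ∀ v, ω v = 0 → 1 ≤ m v v) (v : V) :
    ∑ u ∈ univ.erase v, (m v u : ℤ) ≤ canonicalW m ω v := by
  have hvv : 0 ≤ 2 * (ω v : ℤ) - 2 + 2 * m v v := by
    rcases Nat.eq_zero_or_pos (ω v) with h | h
    · have := hloops v h; omega
    · omega
  rw [sum_erase_eq_sub (mem_univ v), canonicalW, valence]
  linarith

theorem sum_erase_add_two_mul_sum_compl_le_canonicalW_sub_laplacian (ω : V → ℕ)
    (m : V → V → ℕ) (hloops : ∀ v, ω v = 0 → 1 ≤ m v v) {φ : V → ℤ} {B : Finset V} {v : V}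
    (hv : v ∈ B) (hB : ∀ u ∈ B, φ u = φ v) (hBc : ∀ u ∉ B, φ u < φ v) :
    ∑ u ∈ B.erase v, (m v u : ℤ) + 2 * ∑ u ∈ Bᶜ, (m v u : ℤ)
      ≤ canonicalW m ω v - laplacian m φ v := by
  have hlap := laplacian_apply_le_neg_sum_compl m hB hBc
  have hval := sum_erase_le_canonicalW ω m hloops v
  rw [sum_erase_eq_sub (mem_univ v), ← sum_add_sum_compl B] at hval
  rw [sum_erase_eq_sub hv]
  linarith

theorem exists_uniform_linEquiv_of_add_laplacian_eq (ω : V → ℕ) (m : V → V → ℕ)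
    (hsymm : ∀ u v, m u v = m v u) (hloops : ∀ v, ω v = 0 → 1 ≤ m v v) (c : ℤ) (n : ℕ) :
    ∀ φ a b : V → ℤ, (∀ u, c ≤ φ u ∧ φ u ≤ c + n) → Effective a → Effective b →
      a + b + laplacian m φ = canonicalW m ω →
      ∃ a', LinEquiv m a a' ∧ ∀ v, 0 ≤ a' v ∧ a' v ≤ canonicalW m ω v := by
  induction n with
  | zero =>
    intro φ a b hφ ha hb hK
    have hconst : laplacian m φ = 0 := by
      ext v
      simp [laplacian_apply, show ∀ u, φ u = c from fun u => by have := hφ u; omega]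
    refine ⟨a, LinEquiv.refl a, fun v => ⟨ha v, ?_⟩⟩
    have hKv := congrFun hK v
    simp only [hconst, Pi.zero_apply, add_zero, Pi.add_apply] at hKv
    linarith [hb v]
  | succ n ih =>
    intro φ a b hφ ha hb hK
    push_cast at hφ
    set B := univ.filter fun u => c + n < φ u with hB
    have hφB : ∀ v ∈ B, φ v = c + n + 1 := fun v hv => by
      have := (mem_filter.mp hv).2; have := hφ v; omega
    have hφBc : ∀ u ∉ B, φ u ≤ c + n := fun u hu => by simpa [hB] using hu
    have hsplit : ∀ v ∈ B,
        ∑ u ∈ B.erase v, (m v u : ℤ) + 2 * ∑ u ∈ Bᶜ, (m v u : ℤ) ≤ a v + b v := by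
      intro v hv
      have hKv : a v + b v = canonicalW m ω v - laplacian m φ v := by
        rw [← hK]; simp only [Pi.add_apply]; ring
      rw [hKv]
      exact sum_erase_add_two_mul_sum_compl_le_canonicalW_sub_laplacian ω m hloops hv
        (fun u hu => (hφB u hu).trans (hφB v hv).symm)
        (fun u hu => (hφBc u hu).trans_lt (by rw [hφB v hv]; omega))
    obtain ⟨S, hSB, haS, hbS⟩ := exists_subset_effective_add_tZ m hsymm ha hb hsplit
    obtain ⟨a', haa', ha'⟩ := ih (φ - (B : Set V).indicator 1) _ _
      (fun u => by
        by_cases hu : u ∈ B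
        · simp [hu, hφB u hu]
        · simp [hu, (hφ u).1, hφBc u hu])
      haS hbS (by
        rw [map_sub, laplacian_indicator, tZ_eq_add_tZ_sdiff m hSB, ← hK]
        abel)
    exact ⟨a', (LinEquiv.add_tZ a S).trans haa', ha'⟩

end Uniform

theorem exists_uniform_representative_general {V : Type} [Fintype V] [DecidableEq V]
    (ω : V → ℕ) (m : V → V → ℕ) (hsymm : ∀ u v, m u v = m v u)
    (hloops : ∀ v, ω v = 0 → 1 ≤ m v v)
    (d : V → ℤ)
    (h1 : ∃ f : V → ℤ, Effective f ∧ LinEquiv m d f)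
    (h2 : ∃ f : V → ℤ, Effective f ∧ LinEquiv m (canonicalW m ω - d) f) :
    ∃ d' : V → ℤ, LinEquiv m d d' ∧
      ∀ v, 0 ≤ d' v ∧ d' v ≤ canonicalW m ω v := by
  obtain ⟨f, hf, hdf⟩ := h1
  obtain ⟨f', hf', hKdf'⟩ := h2
  obtain ⟨ψ, hψ⟩ : canonicalW m ω - f - f' ∈ (laplacian m).range :=
    closure_range_tZ_le_range_laplacian m <| by
      convert add_mem hdf hKdf' using 1
      abel
  obtain ⟨c, hc⟩ := (Set.finite_range ψ).bddBelow
  obtain ⟨C, hC⟩ := (Set.finite_range ψ).bddAbove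
  obtain ⟨d', hfd', hd'⟩ := exists_uniform_linEquiv_of_add_laplacian_eq ω m hsymm hloops c
    (C - c).toNat ψ f f'
    (fun u => ⟨hc ⟨u, rfl⟩, by have := hC ⟨u, rfl⟩; omega⟩) hf hf' (by rw [hψ]; abel)
  exact ⟨d', hdf.trans hfd', hd'⟩

/-- **Existence of uniform representatives in special classes.** -/
theorem exists_uniform_representative {V : Type} [Fintype V] [DecidableEq V]
    (ω : V → ℕ) (m : V → V → ℕ) (hsymm : ∀ u v, m u v = m v u)
    (hconn : (assocGraph m).Connected)
    (hloops : ∀ v, ω v = 0 → 1 ≤ m v v)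
    (d : V → ℤ)
    (h1 : ∃ f : V → ℤ, Effective f ∧ LinEquiv m d f)
    (h2 : ∃ f : V → ℤ, Effective f ∧ LinEquiv m (canonicalW m ω - d) f) :
    ∃ d' : V → ℤ, LinEquiv m d d' ∧
      ∀ v, 0 ≤ d' v ∧ d' v ≤ canonicalW m ω v :=
  exists_uniform_representative_general ω m hsymm hloops d h1 h2
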